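/- Let γ = ((i₁ j₁),…,(i_k j_k)) ∈ Σ_n(k) and let l ∈ {1,…,k}. Then j_l = max C_{γ_{l−1}}(j_l), i.e. j_l is the largest element of the cycle of γ_{l−1} containing j_l. -/

import Mathlib

/-- ℓ(σ): the number of cycles (orbits) of σ, including fixed points, counted via the
minimal representative of each orbit. -/
noncomputable def cycleCount {n : ℕ} (σ : Equiv.Perm (Fin n)) : ℕ :=
  Set.ncard {x : Fin n | ∀ y, σ.SameCycle x y → x ≤ y}

/-- |σ| := n − ℓ(σ). -/
noncomputable def normPerm {n : ℕ} (σ : Equiv.Perm (Fin n)) : ℕ := n - cycleCount σ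

/-- σ₁ ≼ σ₂ iff |σ₂| = |σ₁| + |σ₁⁻¹σ₂|. -/
def precLe {n : ℕ} (σ₁ σ₂ : Equiv.Perm (Fin n)) : Prop :=
  normPerm σ₂ = normPerm σ₁ + normPerm (σ₁⁻¹ * σ₂)

/-- Σ_n(k): tuples of k transpositions with |τ₁⋯τ_k| = k and τ₁⋯τ_k ≼ (1 … n). -/
def SigmaSet (n k : ℕ) : Set (Fin k → Equiv.Perm (Fin n)) :=
  {τ | (∀ l, (τ l).IsSwap) ∧ normPerm (List.ofFn τ).prod = k ∧
      precLe (List.ofFn τ).prod (finRotate n)}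

/-- γ_m := τ₁∘⋯∘τ_m, the product of the first m entries of the chain. -/
def gammaP {n k : ℕ} (τ : Fin k → Equiv.Perm (Fin n)) (m : ℕ) : Equiv.Perm (Fin n) :=
  ((List.ofFn τ).take m).prod

/-!
Right multiplication by a transposition `(a b)` splits the cycle through `a` and `b` when they
share one and merges their two cycles otherwise, so it changes `|·|` by exactly one. Hence `|·|`
is subadditive, every prefix `γ_m` of a chain in `Σ_n(k)` has `|γ_m| = m` and `γ_m ≼ c`, and
passing from `γ_{l-1}` to `γ_l` merges the cycles of `i_l` and `j_l`.

Every `π ≼ c` traverses each of its cycles in increasing cyclic order: this holds for `c`, and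
splitting such a cycle along a chord `(a b)`, `a < b`, produces two such cycles, the one through
`b` lying in `(a, b]`. Applied to `π = γ_l` and the chord `(i_l j_l)`, this puts the
`γ_{l-1}`-cycle of `j_l` inside `(i_l, j_l]`.
-/

open Equiv Equiv.Perm Set

namespace Equiv.Perm

variable {α : Type*} {σ : Perm α} {s : Set α} {a b x y : α}

theorem SameCycle.mem_of_mapsTo [Finite α] (h : σ.SameCycle x y) (hs : MapsTo σ s s)
    (hx : x ∈ s) : y ∈ s := by
  obtain ⟨m, rfl⟩ := h.exists_nat_pow_eq
  exact hs.perm_pow m hx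

theorem mapsTo_sameCycle (σ : Perm α) (x : α) :
    MapsTo σ {y | σ.SameCycle x y} {y | σ.SameCycle x y} :=
  fun _ hy => sameCycle_apply_right.2 hy

def cycleMins [LE α] (σ : Perm α) : Set α := {x | ∀ y, σ.SameCycle x y → x ≤ y}

theorem eq_of_mem_cycleMins [PartialOrder α] (hx : x ∈ cycleMins σ) (hy : y ∈ cycleMins σ)
    (h : σ.SameCycle x y) : x = y :=
  le_antisymm (hx y h) (hy x h.symm)

theorem exists_mem_cycleMins [LinearOrder α] [Finite α] (σ : Perm α) (x : α) :
    ∃ m ∈ cycleMins σ, σ.SameCycle x m := by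
  obtain ⟨m, hxm, hmin⟩ :=
    Set.exists_min_image {y | σ.SameCycle x y} id (Set.toFinite _) ⟨x, SameCycle.refl σ x⟩
  exact ⟨m, fun y hmy => hmin y (hxm.trans hmy), hxm⟩

theorem cycleMins_inv [LE α] : cycleMins σ⁻¹ = cycleMins σ := by
  simp only [cycleMins, sameCycle_inv]

theorem cycleMins_one [Preorder α] : cycleMins (1 : Perm α) = univ := by
  ext x
  simp [cycleMins, sameCycle_one]

section Swap

variable [DecidableEq α]

theorem mapsTo_mul_swap (hs : MapsTo σ s s) (hab : a ∈ s ↔ b ∈ s) :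
    MapsTo (σ * swap a b) s s := by
  intro z hz
  refine hs ?_
  rw [swap_apply_def]
  split_ifs with hza hzb
  · exact hab.1 (hza ▸ hz)
  · exact hab.2 (hzb ▸ hz)
  · exact hz

variable [Finite α]

theorem SameCycle.of_mul_swap (h : (σ * swap a b).SameCycle x y) (hab : σ.SameCycle a b) :
    σ.SameCycle x y :=
  h.mem_of_mapsTo
    (mapsTo_mul_swap (mapsTo_sameCycle σ x) ⟨(·.trans hab), (·.trans hab.symm)⟩)
    (SameCycle.refl σ x)

theorem SameCycle.of_mul_swap_or (h : (σ * swap a b).SameCycle x y) :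
    σ.SameCycle x y ∨ σ.SameCycle a y ∨ σ.SameCycle b y := by
  refine h.mem_of_mapsTo (s := {y | σ.SameCycle x y ∨ σ.SameCycle a y ∨ σ.SameCycle b y})
    (mapsTo_mul_swap ?_ ?_) (Or.inl (SameCycle.refl σ x))
  · rintro z (hz | hz | hz) <;>
      simp only [mem_ofPred_eq, sameCycle_apply_right, hz, true_or, or_true]
  · simp only [mem_ofPred_eq, SameCycle.refl, or_true, true_or]

theorem sameCycle_mul_swap_of_not_sameCycle (h : ¬σ.SameCycle a b) :
    (σ * swap a b).SameCycle a b := by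
  by_contra h'
  -- The points of the `σ`-cycle of `b` reachable from `a` under `σ * swap a b` would form a
  -- `σ`-invariant set containing `σ b` but not `b`.
  set s := {y | (σ * swap a b).SameCycle a y ∧ σ.SameCycle b y}
  have hs : MapsTo σ s s := by
    rintro y ⟨hay, hby⟩
    have hya : y ≠ a := by rintro rfl; exact h hby.symm
    have hyb : y ≠ b := by rintro rfl; exact h' hay
    have hσy : (σ * swap a b) y = σ y := by rw [mul_apply, swap_apply_of_ne_of_ne hya hyb]
    exact ⟨hσy ▸ sameCycle_apply_right.2 hay, sameCycle_apply_right.2 hby⟩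
  have hσb : σ b ∈ s := ⟨⟨1, by simp⟩, sameCycle_apply_right.2 (SameCycle.refl σ b)⟩
  exact h' ((sameCycle_apply_left.2 (SameCycle.refl σ b)).mem_of_mapsTo hs hσb).1

theorem cycleMins_subset_mul_swap [LE α] (hab : σ.SameCycle a b) :
    cycleMins σ ⊆ cycleMins (σ * swap a b) :=
  fun _ hx y hy => hx y (hy.of_mul_swap hab)

end Swap

end Equiv.Perm

section Count

variable {n : ℕ} {σ : Perm (Fin n)} {a b : Fin n}

theorem cycleCount_eq_ncard (σ : Perm (Fin n)) : cycleCount σ = (cycleMins σ).ncard := rfl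

theorem cycleCount_le (σ : Perm (Fin n)) : cycleCount σ ≤ n := by
  simpa [cycleCount_eq_ncard] using Set.ncard_le_card (cycleMins σ)

theorem cycleCount_le_mul_swap_add_one (σ : Perm (Fin n)) (a b : Fin n) :
    cycleCount σ ≤ cycleCount (σ * swap a b) + 1 := by
  set σ' := σ * swap a b
  obtain ⟨μ, hμ, haμ⟩ := exists_mem_cycleMins σ a
  choose f hf hxf using exists_mem_cycleMins σ'
  have hnot : ∀ x ∈ cycleMins σ \ {μ}, ¬σ.SameCycle a x :=
    fun x hx hax => hx.2 (eq_of_mem_cycleMins hx.1 hμ (hax.symm.trans haμ))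
  -- Only the cycles of `a` and `b` can merge, and the minimum `μ` of the cycle of `a` is left out.
  have hinj : InjOn f (cycleMins σ \ {μ}) := by
    intro x hx y hy hxy
    have hxy' : σ'.SameCycle x y := (hxf x).trans (hxy ▸ (hxf y).symm)
    refine eq_of_mem_cycleMins hx.1 hy.1 ?_
    rcases hxy'.of_mul_swap_or with h | h | hby
    · exact h
    · exact absurd h (hnot y hy)
    rcases hxy'.symm.of_mul_swap_or with h | h | hbx
    · exact h.symm
    · exact absurd h (hnot x hx)
    · exact hbx.symm.trans hby
  calc cycleCount σ = (cycleMins σ \ {μ}).ncard + 1 :=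
        (Set.ncard_sdiff_singleton_add_one hμ).symm
    _ ≤ cycleCount σ' + 1 := by
      gcongr
      exact Set.ncard_le_ncard_of_injOn f (fun x _ => hf x) hinj

theorem cycleCount_lt_mul_swap_apply {x : Fin n} (hx : σ x ≠ x) :
    cycleCount σ < cycleCount (σ * swap x (σ x)) := by
  set σ' := σ * swap x (σ x)
  -- `σ x` becomes a fixed point: a cycle minimum other than that of the cycle of `x`, although
  -- both lie in one cycle of `σ`.
  have hfix : σ' (σ x) = σ x := by simp [σ']
  have hσx : σ x ∈ cycleMins σ' := fun y hy => (hy.eq_of_left hfix).le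
  obtain ⟨m, hm, hxm⟩ := exists_mem_cycleMins σ' x
  have hne : m ≠ σ x := by
    rintro rfl
    exact hx (hxm.eq_of_right hfix).symm
  have hxσx : σ.SameCycle x (σ x) := sameCycle_apply_right.2 (SameCycle.refl σ x)
  refine Set.ncard_lt_ncard ⟨cycleMins_subset_mul_swap hxσx, fun hsup => hne ?_⟩
  exact eq_of_mem_cycleMins (hsup hm) (hsup hσx) ((hxm.of_mul_swap hxσx).symm.trans hxσx)

theorem normPerm_one : normPerm (1 : Perm (Fin n)) = 0 := by
  simp [normPerm, cycleCount_eq_ncard, cycleMins_one]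

theorem normPerm_inv (σ : Perm (Fin n)) : normPerm σ⁻¹ = normPerm σ := by
  rw [normPerm, normPerm, cycleCount_eq_ncard, cycleCount_eq_ncard, cycleMins_inv]

theorem normPerm_mul_swap_le (σ : Perm (Fin n)) (a b : Fin n) :
    normPerm (σ * swap a b) ≤ normPerm σ + 1 := by
  have := cycleCount_le_mul_swap_add_one σ a b
  unfold normPerm
  omega

theorem normPerm_swap_mul_le (σ : Perm (Fin n)) (a b : Fin n) :
    normPerm (swap a b * σ) ≤ normPerm σ + 1 := by
  rw [← normPerm_inv, mul_inv_rev, swap_inv, ← normPerm_inv σ]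
  exact normPerm_mul_swap_le σ⁻¹ a b

theorem normPerm_mul_swap_le_of_sameCycle (hab : σ.SameCycle a b) :
    normPerm (σ * swap a b) ≤ normPerm σ := by
  have := Set.ncard_le_ncard (cycleMins_subset_mul_swap hab)
  have := cycleCount_le (σ * swap a b)
  simp only [normPerm, cycleCount_eq_ncard] at *
  omega

theorem sameCycle_of_normPerm_mul_swap_lt (h : normPerm (σ * swap a b) < normPerm σ) :
    σ.SameCycle a b := by
  by_contra hab
  have := normPerm_mul_swap_le_of_sameCycle (sameCycle_mul_swap_of_not_sameCycle hab)
  rw [mul_swap_mul_self] at this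
  omega

theorem exists_normPerm_mul_swap_lt (hσ : σ ≠ 1) :
    ∃ a b, normPerm (σ * swap a b) < normPerm σ := by
  obtain ⟨x, hx⟩ : ∃ x, σ x ≠ x := not_forall.1 fun h => hσ (Equiv.ext h)
  refine ⟨x, σ x, ?_⟩
  have := cycleCount_lt_mul_swap_apply hx
  have := cycleCount_le (σ * swap x (σ x))
  unfold normPerm
  omega

theorem exists_normPerm_swap_mul_lt (hσ : σ ≠ 1) :
    ∃ a b, a < b ∧ normPerm (swap a b * σ) < normPerm σ := by
  obtain ⟨a, b, h⟩ := exists_normPerm_mul_swap_lt (inv_ne_one.2 hσ)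
  rw [normPerm_inv, ← swap_inv, ← mul_inv_rev, normPerm_inv] at h
  rcases lt_trichotomy a b with hab | rfl | hab
  · exact ⟨a, b, hab, h⟩
  · rw [swap_self, ← Perm.one_def, one_mul] at h
    exact absurd h (lt_irrefl _)
  · exact ⟨b, a, hab, swap_comm a b ▸ h⟩

theorem eq_one_of_normPerm_eq_zero (h : normPerm σ = 0) : σ = 1 := by
  by_contra hσ
  obtain ⟨a, b, hlt⟩ := exists_normPerm_mul_swap_lt hσ
  omega

theorem normPerm_mul_le (ρ π : Perm (Fin n)) :
    normPerm (ρ * π) ≤ normPerm ρ + normPerm π := by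
  induction hπ : normPerm π using Nat.strong_induction_on generalizing π with
  | _ d ih =>
    by_cases h1 : π = 1
    · simp [h1]
    obtain ⟨a, b, hlt⟩ := exists_normPerm_mul_swap_lt h1
    calc normPerm (ρ * π) = normPerm (ρ * (π * swap a b) * swap a b) := by
          rw [mul_assoc, mul_swap_mul_self]
      _ ≤ normPerm (ρ * (π * swap a b)) + 1 := normPerm_mul_swap_le _ a b
      _ ≤ normPerm ρ + normPerm (π * swap a b) + 1 := by
          gcongr
          exact ih _ (hπ ▸ hlt) _ rfl
      _ ≤ normPerm ρ + d := by omega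

theorem normPerm_le_add_normPerm_inv_mul (π σ : Perm (Fin n)) :
    normPerm σ ≤ normPerm π + normPerm (π⁻¹ * σ) := by
  simpa using normPerm_mul_le π (π⁻¹ * σ)

end Count

section AbsoluteOrder

variable {n : ℕ}

theorem precLe_trans {π₁ π₂ π₃ : Perm (Fin n)} (h₁₂ : precLe π₁ π₂) (h₂₃ : precLe π₂ π₃) :
    precLe π₁ π₃ := by
  have h := normPerm_mul_le (π₁⁻¹ * π₂) (π₂⁻¹ * π₃)
  rw [mul_assoc, mul_inv_cancel_left] at h
  have := normPerm_le_add_normPerm_inv_mul π₁ π₃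
  unfold precLe at *
  omega

theorem normPerm_prod_le_length {L : List (Perm (Fin n))} (hL : ∀ τ ∈ L, τ.IsSwap) :
    normPerm L.prod ≤ L.length := by
  induction L with
  | nil => simp [normPerm_one]
  | cons τ L ih =>
    obtain ⟨a, b, -, rfl⟩ := hL τ List.mem_cons_self
    have := ih fun τ hτ => hL τ (List.mem_cons_of_mem _ hτ)
    have := normPerm_swap_mul_le L.prod a b
    simp only [List.prod_cons, List.length_cons]
    omega

section SwapWord

variable {L : List (Perm (Fin n))} (hL : ∀ τ ∈ L, τ.IsSwap)
include hL

theorem normPerm_prod_take_le (m : ℕ) : normPerm (L.take m).prod ≤ min m L.length := by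
  have := normPerm_prod_le_length fun τ hτ => hL τ (List.mem_of_mem_take (l := L) (i := m) hτ)
  rwa [List.length_take] at this

theorem normPerm_prod_drop_le (m : ℕ) : normPerm (L.drop m).prod ≤ L.length - m := by
  have := normPerm_prod_le_length fun τ hτ => hL τ (List.mem_of_mem_drop (l := L) (i := m) hτ)
  rwa [List.length_drop] at this

variable (hred : normPerm L.prod = L.length)
include hred

theorem normPerm_prod_take_add_normPerm_prod_drop (m : ℕ) :
    normPerm (L.take m).prod + normPerm (L.drop m).prod = L.length := by
  have := normPerm_mul_le (L.take m).prod (L.drop m).prod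
  rw [← List.prod_append, List.take_append_drop] at this
  have := normPerm_prod_take_le hL m
  have := normPerm_prod_drop_le hL m
  omega

theorem normPerm_prod_take {m : ℕ} (hm : m ≤ L.length) : normPerm (L.take m).prod = m := by
  have := normPerm_prod_take_add_normPerm_prod_drop hL hred m
  have := normPerm_prod_take_le hL m
  have := normPerm_prod_drop_le hL m
  omega

theorem precLe_prod_take (m : ℕ) : precLe (L.take m).prod L.prod := by
  have hdrop : (L.take m).prod⁻¹ * L.prod = (L.drop m).prod := by
    rw [inv_mul_eq_iff_eq_mul, ← List.prod_append, List.take_append_drop]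
  rw [precLe, hdrop, normPerm_prod_take_add_normPerm_prod_drop hL hred m, hred]

end SwapWord

end AbsoluteOrder

namespace Equiv.Perm

variable {α : Type*} [LinearOrder α]

/-- On each of its cycles, `π` maps `x` to the next element of the cycle in the cyclic order of
`α`: the least larger one, or the minimum of the cycle when `x` is its maximum. -/
def CyclicallyIncreasing (π : Perm α) : Prop :=
  ∀ ⦃x y⦄, π.SameCycle x y → (x < y → x < π x ∧ π x ≤ y) ∧ (y < x → π x ≤ y ∨ x < π x)

theorem cyclicallyIncreasing_finRotate (n : ℕ) : CyclicallyIncreasing (finRotate n) := by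
  cases n with
  | zero => exact fun x => x.elim0
  | succ n =>
    intro x y _
    refine ⟨fun hxy => ⟨(lt_finRotate_iff_ne_last x).2 (Fin.ne_last_of_lt hxy), ?_⟩, fun _ => ?_⟩
    · exact finRotate_apply x ▸ Fin.add_one_le_of_lt hxy
    · by_cases hx : x = Fin.last n
      · rw [hx, finRotate_last]
        exact Or.inl (Fin.zero_le y)
      · exact Or.inr ((lt_finRotate_iff_ne_last x).2 hx)

namespace CyclicallyIncreasing

variable {π : Perm α} {a b y : α} (hπ : CyclicallyIncreasing π)
  (hab : π.SameCycle a b) (hlt : a < b)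
include hπ hab hlt

theorem mapsTo_mul_swap_Ioc :
    MapsTo (π * swap a b) {z | z ∈ Ioc a b ∧ π.SameCycle b z}
      {z | z ∈ Ioc a b ∧ π.SameCycle b z} := by
  rintro z ⟨⟨haz, hzb⟩, hbz⟩
  rcases hzb.lt_or_eq with hzb | rfl
  · rw [mul_apply, swap_apply_of_ne_of_ne haz.ne' hzb.ne]
    obtain ⟨h1, h2⟩ := (hπ hbz.symm).1 hzb
    exact ⟨⟨haz.trans h1, h2⟩, sameCycle_apply_right.2 hbz⟩
  · rw [mul_apply, swap_apply_right]
    obtain ⟨h1, h2⟩ := (hπ hab).1 hlt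
    exact ⟨⟨h1, h2⟩, sameCycle_apply_right.2 hab.symm⟩

variable [Finite α]

theorem mem_Ioc_of_sameCycle_mul_swap_right (h : (π * swap a b).SameCycle b y) : y ∈ Ioc a b :=
  (h.mem_of_mapsTo (hπ.mapsTo_mul_swap_Ioc hab hlt) ⟨⟨hlt, le_rfl⟩, SameCycle.refl π b⟩).1

theorem notMem_Ioc_of_sameCycle_mul_swap_left (h : (π * swap a b).SameCycle a y) :
    y ∉ Ioc a b := fun hy =>
  (h.symm.mem_of_mapsTo (hπ.mapsTo_mul_swap_Ioc hab hlt)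
    ⟨hy, hab.symm.trans (h.of_mul_swap hab)⟩).1.1.false

theorem mul_swap : CyclicallyIncreasing (π * swap a b) := by
  intro x y hxy
  have hπxy := hxy.of_mul_swap hab
  by_cases hxb : x = b
  · rw [hxb] at hxy hπxy ⊢
    have hy := hπ.mem_Ioc_of_sameCycle_mul_swap_right hab hlt hxy
    rw [mul_apply, swap_apply_right]
    exact ⟨fun hby => absurd hby hy.2.not_gt,
      fun _ => Or.inl ((hπ (hab.trans hπxy)).1 hy.1).2⟩
  by_cases hxa : x = a
  · rw [hxa] at hxy hπxy ⊢
    have hy := hπ.notMem_Ioc_of_sameCycle_mul_swap_left hab hlt hxy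
    have hby := hab.symm.trans hπxy
    rw [mul_apply, swap_apply_left]
    refine ⟨fun hay => ?_, fun hya => ((hπ hby).2 (hya.trans hlt)).imp_right hlt.trans⟩
    obtain ⟨h1, h2⟩ := (hπ hby).1 (lt_of_not_ge fun hyb => hy ⟨hay, hyb⟩)
    exact ⟨hlt.trans h1, h2⟩
  rw [mul_apply, swap_apply_of_ne_of_ne hxa hxb]
  exact hπ hπxy

end CyclicallyIncreasing

theorem cyclicallyIncreasing_of_precLe_finRotate {n : ℕ} (π : Perm (Fin n))
    (hπ : precLe π (finRotate n)) : CyclicallyIncreasing π := by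
  induction hd : normPerm (π⁻¹ * finRotate n) generalizing π with
  | zero =>
    obtain rfl := inv_mul_eq_one.1 (eq_one_of_normPerm_eq_zero hd)
    exact cyclicallyIncreasing_finRotate n
  | succ d ih =>
    have hne : π⁻¹ * finRotate n ≠ 1 := by
      rintro h1
      rw [h1, normPerm_one] at hd
      omega
    obtain ⟨a, b, hlt, hshorter⟩ := exists_normPerm_swap_mul_lt hne
    set π₂ := π * swap a b
    have hπ₂inv : π₂⁻¹ * finRotate n = swap a b * (π⁻¹ * finRotate n) := by
      rw [mul_inv_rev, swap_inv, mul_assoc]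
    have hup : normPerm π₂ ≤ normPerm π + 1 := normPerm_mul_swap_le π a b
    have hdown := normPerm_le_add_normPerm_inv_mul π₂ (finRotate n)
    rw [hπ₂inv] at hdown
    unfold precLe at hπ
    have hπ₂ : CyclicallyIncreasing π₂ :=
      ih π₂ (by unfold precLe; rw [hπ₂inv]; omega) (by rw [hπ₂inv]; omega)
    have hsplit : π₂.SameCycle a b :=
      sameCycle_of_normPerm_mul_swap_lt (by rw [mul_swap_mul_self]; omega)
    simpa [π₂, mul_swap_mul_self] using hπ₂.mul_swap hsplit hlt

end Equiv.Perm

/-- If γ = ((i₁ j₁),…,(i_k j_k)) ∈ Σ_n(k) and l ∈ {1,…,k}, then j_l is the largest element of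
the cycle of γ_{l−1} containing j_l. -/
theorem stmt4 (n k : ℕ) (i j : Fin k → Fin n) (hij : ∀ l, i l < j l)
    (hγ : (fun l => Equiv.swap (i l) (j l)) ∈ SigmaSet n k) (l : Fin k) :
    ∀ y, (gammaP (fun m => Equiv.swap (i m) (j m)) (l : ℕ)).SameCycle (j l) y → y ≤ j l := by
  obtain ⟨hswap, hred, hprec⟩ := hγ
  set L := List.ofFn fun m => swap (i m) (j m)
  have hL : ∀ τ ∈ L, τ.IsSwap := List.forall_mem_ofFn_iff.2 hswap
  have hlen : L.length = k := List.length_ofFn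
  rw [← hlen] at hred
  have hstep : (L.take (l + 1)).prod = (L.take l).prod * swap (i l) (j l) := by
    rw [List.prod_take_succ L l (by rw [hlen]; exact l.isLt), List.getElem_ofFn]
  have hπ : CyclicallyIncreasing (L.take (l + 1)).prod :=
    cyclicallyIncreasing_of_precLe_finRotate _
      (precLe_trans (precLe_prod_take hL hred _) hprec)
  have hab : (L.take (l + 1)).prod.SameCycle (i l) (j l) := by
    refine sameCycle_of_normPerm_mul_swap_lt ?_
    rw [normPerm_prod_take hL hred (m := l + 1) (by omega), hstep, mul_swap_mul_self,
      normPerm_prod_take hL hred (by omega)]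
    omega
  intro y hy
  change (L.take l).prod.SameCycle (j l) y at hy
  rw [← mul_swap_mul_self (i l) (j l) (L.take l).prod, ← hstep] at hy
  exact (hπ.mem_Ioc_of_sameCycle_mul_swap_right hab (hij l) hy).2
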